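/- arXiv:2512.01225 — 3 statements merged into one kernel-verified Lean document; each statement's English description precedes it below -/
import Mathlib

section
/- Kernel of the linearized operator (Lemma 1.1(2)): The function g(x) = √(α(x))·Q'(x) satisfies g''(x) = (1/4 − (b(1+2b)/4)·sech²(νx))·g(x) for all x ∈ ℝ; equivalently Hg = 0, i.e. √α·∂_xQ lies in the kernel of H. -/
open Real MeasureTheory Filter

noncomputable section

/-- `ν = -(b+1)/2`. -/
def nuP (b : ℝ) : ℝ := -(b + 1) / 2

/-- The lefton momentum profile `Q(x) = (A(1-b)/2) (cosh(νx))^{b/ν}`. -/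
def Qp (b A : ℝ) (x : ℝ) : ℝ :=
  A * (1 - b) / 2 * Real.cosh (nuP b * x) ^ (b / nuP b)

/-- The lefton velocity profile `q(x) = A (cosh(νx))^{-1/ν}`. -/
def qp (b A : ℝ) (x : ℝ) : ℝ := A * Real.cosh (nuP b * x) ^ (-1 / nuP b)

/-- `k = (A(1-b)/2)^{1/b+1}`. -/
def kP (b A : ℝ) : ℝ := (A * (1 - b) / 2) ^ (1 / b + 1)

/-- The weight `α(x) = Q(x)^{-1/b-2}`. -/
def alphaP (b A : ℝ) (x : ℝ) : ℝ := Qp b A x ^ (-1 / b - 2)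

/-- `SQ(x) = (2k(1-b)/b) Q^{-1/b} + (2(b-1)/b) Q`. -/
def SQp (b A : ℝ) (x : ℝ) : ℝ :=
  2 * kP b A * (1 - b) / b * Qp b A x ^ (-1 / b) + 2 * (b - 1) / b * Qp b A x

/-- The Pöschl–Teller potential `H̃₀(x) = 1/4 - (b(1+2b)/4) sech²(νx)`. -/
def Htilde0 (b : ℝ) (x : ℝ) : ℝ :=
  1 / 4 - b * (1 + 2 * b) / 4 * (1 / Real.cosh (nuP b * x)) ^ 2

/-- The Schrödinger operator `(Hg)(x) = (2k/b²)(−g'' + H̃₀ g)`. -/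
def Hop (b A : ℝ) (g : ℝ → ℝ) (x : ℝ) : ℝ :=
  2 * kP b A / b ^ 2 * (-(deriv (deriv g) x) + Htilde0 b x * g x)

/-- The linearized operator `(𝓛f)(x) = k(−((2α/b²) f')' − (2(b+1)/b) α f)`. -/
def Lop (b A : ℝ) (f : ℝ → ℝ) (x : ℝ) : ℝ :=
  kP b A * (-(deriv (fun y => 2 * alphaP b A y / b ^ 2 * deriv f y) x)
    - 2 * (b + 1) / b * alphaP b A x * f x)

/-- The integrand of the conserved functional `F₂`. -/
def F2Integrand (b : ℝ) (f : ℝ → ℝ) (x : ℝ) : ℝ :=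
  f x ^ (-1 / b) * ((deriv f x) ^ 2 / (b ^ 2 * f x ^ 2) + 1)

/-- The squared weighted norm `‖f‖²_{H¹_α} = ∫ (f² + f'²) α`. -/
def HalphaSq (b A : ℝ) (f : ℝ → ℝ) : ℝ :=
  ∫ x, (f x ^ 2 + deriv f x ^ 2) * alphaP b A x

/-- The `𝒵`-norm `‖f‖_𝒵 = ‖f‖_{H¹_α} + sup_x |f(x)|/Q(x)`. -/
def ZNorm (b A : ℝ) (f : ℝ → ℝ) : ℝ :=
  Real.sqrt (HalphaSq b A f) + ⨆ x : ℝ, |f x| / Qp b A x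

/-- `m : ℝ → ℝ → ℝ` (time then space) solves the b-family equation in momentum form,
with velocity `u` satisfying `m = u - u_xx` and `m_t + u m_x + b u_x m = 0`. -/
def IsBFamilySolution (b : ℝ) (m u : ℝ → ℝ → ℝ) : Prop :=
  (∀ t x, m t x = u t x - deriv (deriv (u t)) x) ∧
  ∀ t x, deriv (fun s => m s x) t + u t x * deriv (m t) x + b * deriv (u t) x * m t x = 0

/-- `(v, h)` solves the linearization of the b-family equation around the lefton:
`h - h_xx = v` and `v_t = ∂_x(q h_xx + (b-1) q' h_x - (b+1) q h + q'' h)`. -/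
def IsLinearizedSolution (b A : ℝ) (v h : ℝ → ℝ → ℝ) : Prop :=
  (∀ t x, h t x - deriv (deriv (h t)) x = v t x) ∧
  ∀ t x, deriv (fun s => v s x) t =
    deriv (fun y => qp b A y * deriv (deriv (h t)) y
      + (b - 1) * deriv (qp b A) y * deriv (h t) y
      - (b + 1) * qp b A y * h t y + deriv (deriv (qp b A)) y * h t y) x

/-- The quadratic form `(𝓛η, η) = (2k/b²)∫ η'² α − (2k(b+1)/b)∫ η² α`. -/
def quadFormL (b A : ℝ) (η : ℝ → ℝ) : ℝ :=
  2 * kP b A / b ^ 2 * (∫ x, deriv η x ^ 2 * alphaP b A x)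
    - 2 * kP b A * (b + 1) / b * (∫ x, η x ^ 2 * alphaP b A x)

/-- The monotonicity weight `ψ_L(x) = (2/π) arctan(exp(νx/L))` with `L = 3 - b`. -/
def psiL (b : ℝ) (x : ℝ) : ℝ :=
  2 / Real.pi * Real.arctan (Real.exp (nuP b * x / (3 - b)))


/-!
Since `Q` is a constant times `cosh(νx)^{b/ν}`, the product `√α · Q'` is a constant multiple of
`cosh(νx)^p sinh(νx)` with `p = -1/(2ν) - 1`. Using `sinh² = cosh² - 1`, twice differentiating
`cosh(νx)^p sinh(νx)` multiplies it by `ν²(p+1)² - ν²p(p-1) sech²(νx)`, and the choice of `p`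
gives `ν(p+1) = -1/2`, `νp = b/2`, `ν(p-1) = b + 1/2`: this is the Pöschl–Teller potential `H̃₀`.
-/

lemma hasDerivAt_cosh_mul_rpow (ν r x : ℝ) :
    HasDerivAt (fun y => Real.cosh (ν * y) ^ r)
      (r * Real.cosh (ν * x) ^ (r - 1) * (ν * Real.sinh (ν * x))) x :=
  (((Real.hasDerivAt_cosh (ν * x)).comp x ((hasDerivAt_id x).const_mul ν)).rpow_const
    (Or.inl (Real.cosh_pos _).ne')).congr_deriv (by simp only [Function.comp_apply, mul_one]; ring)

lemma hasDerivAt_sinh_mul (ν x : ℝ) :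
    HasDerivAt (fun y => Real.sinh (ν * y)) (ν * Real.cosh (ν * x)) x :=
  ((Real.hasDerivAt_sinh (ν * x)).comp x ((hasDerivAt_id x).const_mul ν)).congr_deriv
    (by simp only [mul_one]; ring)

lemma hasDerivAt_cosh_mul_rpow_mul_sinh (ν p x : ℝ) :
    HasDerivAt (fun y => Real.cosh (ν * y) ^ p * Real.sinh (ν * y))
      (ν * (p + 1) * Real.cosh (ν * x) ^ (p + 1) - ν * p * Real.cosh (ν * x) ^ (p - 1)) x := by
  refine ((hasDerivAt_cosh_mul_rpow ν p x).mul (hasDerivAt_sinh_mul ν x)).congr_deriv ?_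
  have hc : Real.cosh (ν * x) ≠ 0 := (Real.cosh_pos _).ne'
  have hsinh : Real.sinh (ν * x) ^ 2 = Real.cosh (ν * x) ^ 2 - 1 := by
    linear_combination -Real.cosh_sq_sub_sinh_sq (ν * x)
  have hp : Real.cosh (ν * x) ^ p = Real.cosh (ν * x) ^ (p - 1) * Real.cosh (ν * x) := by
    rw [← Real.rpow_add_one hc, sub_add_cancel]
  have hp1 : Real.cosh (ν * x) ^ (p + 1) = Real.cosh (ν * x) ^ (p - 1) * Real.cosh (ν * x) ^ 2 := by
    rw [show p + 1 = p - 1 + 1 + 1 by ring, Real.rpow_add_one hc, Real.rpow_add_one hc]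
    ring
  rw [hp1, hp]
  linear_combination ν * p * Real.cosh (ν * x) ^ (p - 1) * hsinh

lemma deriv_deriv_cosh_mul_rpow_mul_sinh (ν p x : ℝ) :
    deriv (deriv fun y => Real.cosh (ν * y) ^ p * Real.sinh (ν * y)) x
      = (ν ^ 2 * (p + 1) ^ 2 - ν ^ 2 * (p * (p - 1)) * (1 / Real.cosh (ν * x)) ^ 2)
        * (Real.cosh (ν * x) ^ p * Real.sinh (ν * x)) := by
  have hderiv : deriv (fun y => Real.cosh (ν * y) ^ p * Real.sinh (ν * y))
      = fun y => ν * (p + 1) * Real.cosh (ν * y) ^ (p + 1) - ν * p * Real.cosh (ν * y) ^ (p - 1) :=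
    funext fun y => (hasDerivAt_cosh_mul_rpow_mul_sinh ν p y).deriv
  have hderiv2 : HasDerivAt
      (fun y => ν * (p + 1) * Real.cosh (ν * y) ^ (p + 1) - ν * p * Real.cosh (ν * y) ^ (p - 1))
      (ν * (p + 1) * ((p + 1) * Real.cosh (ν * x) ^ (p + 1 - 1) * (ν * Real.sinh (ν * x)))
        - ν * p * ((p - 1) * Real.cosh (ν * x) ^ (p - 1 - 1) * (ν * Real.sinh (ν * x)))) x :=
    ((hasDerivAt_cosh_mul_rpow ν (p + 1) x).const_mul _).sub
      ((hasDerivAt_cosh_mul_rpow ν (p - 1) x).const_mul _)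
  have hc : 0 < Real.cosh (ν * x) := Real.cosh_pos _
  rw [hderiv, hderiv2.deriv, add_sub_cancel_right, show p - 1 - 1 = p - 2 by ring,
    Real.rpow_sub hc, Real.rpow_two]
  field_simp

lemma hasDerivAt_Qp {b : ℝ} (A : ℝ) (hν : nuP b ≠ 0) (x : ℝ) :
    HasDerivAt (Qp b A)
      (A * (1 - b) / 2 * b * Real.cosh (nuP b * x) ^ (b / nuP b - 1) * Real.sinh (nuP b * x)) x := by
  refine ((hasDerivAt_cosh_mul_rpow (nuP b) (b / nuP b) x).const_mul (A * (1 - b) / 2)).congr_deriv ?_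
  field_simp

lemma sqrt_alphaP_mul_deriv_Qp {b A : ℝ} (hb : b < -1) (hA : 0 < A) (y : ℝ) :
    Real.sqrt (alphaP b A y) * deriv (Qp b A) y
      = (A * (1 - b) / 2) ^ ((-1 / b - 2) / 2) * (A * (1 - b) / 2 * b) *
          (Real.cosh (nuP b * y) ^ (-1 / (2 * nuP b) - 1) * Real.sinh (nuP b * y)) := by
  set ν := nuP b with hν
  have hν0 : ν ≠ 0 := by rw [hν, nuP]; linarith
  have hb0 : b ≠ 0 := by linarith
  have hC : 0 ≤ A * (1 - b) / 2 := by nlinarith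
  have hc : 0 < Real.cosh (ν * y) := Real.cosh_pos _
  have hsqrt : Real.sqrt (alphaP b A y)
      = (A * (1 - b) / 2) ^ ((-1 / b - 2) / 2) * Real.cosh (ν * y) ^ (b / ν * (-1 / b - 2) / 2) := by
    rw [alphaP, Qp, Real.mul_rpow hC (Real.rpow_nonneg hc.le _), ← Real.rpow_mul hc.le,
      Real.sqrt_mul (Real.rpow_nonneg hC _), Real.sqrt_eq_rpow, Real.sqrt_eq_rpow,
      ← Real.rpow_mul hC, ← Real.rpow_mul hc.le, mul_one_div, mul_one_div]
  have hexp : Real.cosh (ν * y) ^ (b / ν * (-1 / b - 2) / 2) * Real.cosh (ν * y) ^ (b / ν - 1)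
      = Real.cosh (ν * y) ^ (-1 / (2 * ν) - 1) := by
    rw [← Real.rpow_add hc]
    congr 1
    field_simp
    ring
  rw [hsqrt, (hasDerivAt_Qp A hν0 y).deriv, ← hexp]
  ring

lemma nuP_sq_mul_exponent_eq {b : ℝ} (hb : b ≠ -1) (s : ℝ) :
    nuP b ^ 2 * (-1 / (2 * nuP b) - 1 + 1) ^ 2
        - nuP b ^ 2 * ((-1 / (2 * nuP b) - 1) * (-1 / (2 * nuP b) - 1 - 1)) * s
      = 1 / 4 - b * (1 + 2 * b) / 4 * s := by
  have hb1 : b + 1 ≠ 0 := fun h => hb (by linarith)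
  rw [nuP]
  field_simp
  ring

/-- **Kernel of the linearized operator** (Lemma 1.1(2)): `g = √α · Q'` satisfies
`g'' = H̃₀ g`, i.e. `Hg = 0`. -/
theorem kernel_of_H (b A : ℝ) (hb : b < -1) (hA : 0 < A) :
    (∀ x : ℝ,
      deriv (deriv (fun y => Real.sqrt (alphaP b A y) * deriv (Qp b A) y)) x
        = Htilde0 b x * (Real.sqrt (alphaP b A x) * deriv (Qp b A) x)) ∧
    ∀ x : ℝ, Hop b A (fun y => Real.sqrt (alphaP b A y) * deriv (Qp b A) y) x = 0 := by
  have hkernel : ∀ x, deriv (deriv (fun y => Real.sqrt (alphaP b A y) * deriv (Qp b A) y)) x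
      = Htilde0 b x * (Real.sqrt (alphaP b A x) * deriv (Qp b A) x) := by
    intro x
    rw [funext (sqrt_alphaP_mul_deriv_Qp hb hA), sqrt_alphaP_mul_deriv_Qp hb hA x,
      deriv_const_mul_field', deriv_const_mul_field, deriv_deriv_cosh_mul_rpow_mul_sinh,
      nuP_sq_mul_exponent_eq hb.ne, Htilde0]
    ring
  refine ⟨hkernel, fun x => ?_⟩
  rw [Hop, hkernel x]
  ring
end
end

section
/- Action of H on √α·Q² (Lemma 1.1(5)): For all x ∈ ℝ, H(√α·Q²)(x) = (2k(1−b)/b)·√(α(x))·Q(x)² + (2(b−1)/b)·√(α(x))·Q(x)^{1/b+3}; equivalently, 𝓛(Q²)(x) = SQ(x) for all x, where SQ(x) = (2k(1−b)/b)·Q(x)^{−1/b} + (2(b−1)/b)·Q(x). -/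
/-! `Q`, `α` and `√α·Q²` are constant multiples of powers `cosh(νx)^s`, whose second derivative is
`ν²s(s cosh^s − (s−1) cosh^(s−2))`. The weighted flux `α (Q²)'` is a multiple of `(Q^(-1/b))'`, and
`Q^(1/b+1) = k sech²(νx)`, so both identities reduce to matching the coefficients of `cosh^s` and
`cosh^(s−2)`. -/

open Real MeasureTheory Filter

noncomputable section

namespace Real

theorem hasDerivAt_cosh_mul_rpow (ν s x : ℝ) :
    HasDerivAt (fun y => cosh (ν * y) ^ s)
      (ν * s * cosh (ν * x) ^ (s - 1) * sinh (ν * x)) x := by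
  convert (((hasDerivAt_id' x).const_mul ν).cosh).rpow_const (p := s)
    (Or.inl (cosh_pos (ν * x)).ne') using 1
  ring

theorem deriv_cosh_mul_rpow (ν s : ℝ) :
    deriv (fun y => cosh (ν * y) ^ s) = fun x => ν * s * cosh (ν * x) ^ (s - 1) * sinh (ν * x) :=
  funext fun x => (hasDerivAt_cosh_mul_rpow ν s x).deriv

theorem cosh_rpow_sub_two (x s : ℝ) : cosh x ^ (s - 2) = cosh x ^ s / cosh x ^ 2 := by
  simpa using rpow_sub_natCast (cosh_pos x).ne' s 2

theorem deriv_deriv_cosh_mul_rpow (ν s x : ℝ) :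
    deriv (deriv fun y => cosh (ν * y) ^ s) x
      = ν ^ 2 * s * (s * cosh (ν * x) ^ s - (s - 1) * cosh (ν * x) ^ (s - 2)) := by
  have h := ((hasDerivAt_cosh_mul_rpow ν (s - 1) x).const_mul (ν * s)).mul
    ((hasDerivAt_id' x).const_mul ν).sinh
  rw [deriv_cosh_mul_rpow]
  refine h.deriv.trans ?_
  have hc := (cosh_pos (ν * x)).ne'
  rw [sub_sub, one_add_one_eq_two, cosh_rpow_sub_two, rpow_sub_one hc]
  field_simp
  rw [sinh_sq]
  ring

theorem cosh_mul_rpow_mul_deriv_cosh_mul_rpow (ν a t y : ℝ) (h : a + t ≠ 0) :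
    cosh (ν * y) ^ a * deriv (fun y => cosh (ν * y) ^ t) y
      = t / (a + t) * deriv (fun y => cosh (ν * y) ^ (a + t)) y := by
  simp only [deriv_cosh_mul_rpow]
  rw [add_sub_assoc, rpow_add (cosh_pos (ν * y))]
  field_simp

end Real

section Lefton

variable {b A : ℝ}

theorem Qp_pos (hb : b < 1) (hA : 0 < A) (x : ℝ) : 0 < Qp b A x :=
  mul_pos (by nlinarith) (rpow_pos_of_pos (cosh_pos _) _)

theorem Qp_rpow (hC : 0 ≤ A * (1 - b) / 2) (r x : ℝ) :
    Qp b A x ^ r = (A * (1 - b) / 2) ^ r * cosh (nuP b * x) ^ (b / nuP b * r) := by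
  rw [Qp, mul_rpow hC (rpow_nonneg (cosh_pos _).le _), ← rpow_mul (cosh_pos _).le]

theorem Qp_rpow_inv_add_one (hb : b < -1) (hA : 0 < A) (x : ℝ) :
    Qp b A x ^ (1 / b + 1) = kP b A / cosh (nuP b * x) ^ 2 := by
  have hb0 : b ≠ 0 := by linarith
  have hb1 : b + 1 ≠ 0 := by linarith
  have hexp : b / nuP b * (1 / b + 1) = -2 := by
    unfold nuP
    field_simp
    ring
  rw [Qp_rpow (by nlinarith), hexp, rpow_neg (cosh_pos _).le, rpow_two, kP, ← div_eq_mul_inv]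

theorem sqrt_alphaP_mul_Qp_rpow (hb : b < 1) (hA : 0 < A) (t x : ℝ) :
    √(alphaP b A x) * Qp b A x ^ t = Qp b A x ^ ((-1 / b - 2) / 2 + t) := by
  have hQ := Qp_pos hb hA x
  rw [alphaP, sqrt_eq_rpow, ← rpow_mul hQ.le, ← rpow_add hQ, mul_one_div]

theorem alphaP_mul_Qp_sq (hb : b < 1) (hA : 0 < A) (x : ℝ) :
    alphaP b A x * Qp b A x ^ 2 = Qp b A x ^ (-1 / b) := by
  rw [alphaP, ← rpow_two, ← rpow_add (Qp_pos hb hA x), sub_add_cancel]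

theorem Qp_rpow_mul_deriv_Qp_rpow (hb : b < -1) (hA : 0 < A) {r s : ℝ} (h : r + s ≠ 0)
    (y : ℝ) :
    Qp b A y ^ r * deriv (fun y => Qp b A y ^ s) y
      = s / (r + s) * deriv (fun y => Qp b A y ^ (r + s)) y := by
  have hC : 0 < A * (1 - b) / 2 := by nlinarith
  have hb0 : b ≠ 0 := by linarith
  have hν : nuP b ≠ 0 := by unfold nuP; linarith
  simp only [Qp_rpow hC.le, deriv_const_mul_field']
  rw [mul_mul_mul_comm, mul_add (b / nuP b) r s,
    cosh_mul_rpow_mul_deriv_cosh_mul_rpow _ _ _ _ (by rw [← mul_add]; positivity),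
    ← rpow_add hC]
  field_simp

theorem Hop_sqrt_alphaP_mul_Qp_sq (hb : b < -1) (hA : 0 < A) (x : ℝ) :
    Hop b A (fun y => √(alphaP b A y) * Qp b A y ^ 2) x
      = 2 * kP b A * (1 - b) / b * √(alphaP b A x) * Qp b A x ^ 2
        + 2 * (b - 1) / b * √(alphaP b A x) * Qp b A x ^ (1 / b + 3) := by
  have hb0 : b ≠ 0 := by linarith
  have hb1 : b + 1 ≠ 0 := by linarith
  have hC : 0 < A * (1 - b) / 2 := by nlinarith
  set s := b / nuP b * ((-1 / b - 2) / 2 + 2) with hs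
  have hg : ∀ y, √(alphaP b A y) * Qp b A y ^ 2
      = (A * (1 - b) / 2) ^ ((-1 / b - 2) / 2 + 2) * cosh (nuP b * y) ^ s := fun y => by
    rw [← rpow_two, sqrt_alphaP_mul_Qp_rpow (by linarith) hA, Qp_rpow hC.le]
  have hg' : √(alphaP b A x) * Qp b A x ^ (1 / b + 3)
      = √(alphaP b A x) * Qp b A x ^ 2 * (kP b A / cosh (nuP b * x) ^ 2) := by
    rw [← Qp_rpow_inv_add_one hb hA, mul_assoc, ← rpow_two, ← rpow_add (Qp_pos (by linarith) hA x)]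
    ring_nf
  rw [Hop, funext hg, mul_assoc (2 * kP b A * (1 - b) / b), mul_assoc (2 * (b - 1) / b), hg',
    hg x]
  simp only [deriv_const_mul_field', deriv_deriv_cosh_mul_rpow, Htilde0, cosh_rpow_sub_two]
  have hs' : s = (1 - 2 * b) / (b + 1) := by
    rw [hs, nuP]
    field_simp
    ring
  have hc := (cosh_pos (nuP b * x)).ne'
  generalize cosh (nuP b * x) ^ s = W
  generalize cosh (nuP b * x) = c at hc
  rw [hs', nuP]
  field_simp
  ring

theorem Lop_Qp_sq (hb : b < -1) (hA : 0 < A) (x : ℝ) :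
    Lop b A (fun y => Qp b A y ^ 2) x = SQp b A x := by
  have hb0 : b ≠ 0 := by linarith
  have hb1 : b + 1 ≠ 0 := by linarith
  have hC : 0 < A * (1 - b) / 2 := by nlinarith
  have hflux : ∀ y, 2 * alphaP b A y / b ^ 2 * deriv (fun y => Qp b A y ^ 2) y
      = -4 / b * deriv (fun y => Qp b A y ^ (-1 / b)) y := fun y => by
    calc 2 * alphaP b A y / b ^ 2 * deriv (fun y => Qp b A y ^ 2) y
        = 2 / b ^ 2 * (Qp b A y ^ (-1 / b - 2) * deriv (fun y => Qp b A y ^ (2 : ℝ)) y) := by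
          simp only [alphaP, rpow_two]
          ring
      _ = 2 / b ^ 2 * (2 / (-1 / b - 2 + 2) * deriv (fun y => Qp b A y ^ (-1 / b - 2 + 2)) y) := by
          rw [Qp_rpow_mul_deriv_Qp_rpow hb hA (by rw [sub_add_cancel]; positivity)]
      _ = -4 / b * deriv (fun y => Qp b A y ^ (-1 / b)) y := by
          rw [sub_add_cancel]
          field_simp
          ring
  have hQ : Qp b A x = Qp b A x ^ (-1 / b) * (kP b A / cosh (nuP b * x) ^ 2) := by
    rw [← Qp_rpow_inv_add_one hb hA, ← rpow_add (Qp_pos (by linarith) hA x),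
      show -1 / b + (1 / b + 1) = 1 by ring, rpow_one]
  rw [Lop, SQp, funext hflux, mul_assoc (2 * (b + 1) / b), alphaP_mul_Qp_sq (by linarith) hA,
    funext (Qp_rpow hC.le (-1 / b))]
  -- expand `Q x ^ (-1/b)` first, so that `hQ` only rewrites the bare `Q x` coming from `SQ`
  rw [Qp_rpow hC.le (-1 / b) x] at hQ ⊢
  rw [hQ]
  simp only [deriv_const_mul_field', deriv_deriv_cosh_mul_rpow, cosh_rpow_sub_two]
  have hp : b / nuP b * (-1 / b) = 2 / (b + 1) := by
    rw [nuP]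
    field_simp
  have hc := (cosh_pos (nuP b * x)).ne'
  rw [hp]
  generalize cosh (nuP b * x) ^ (2 / (b + 1)) = W
  generalize cosh (nuP b * x) = c at hc
  rw [nuP]
  field_simp
  ring

end Lefton

/-- **Action of `H` on `√α·Q²`** (Lemma 1.1(5)): `H(√α Q²) = (2k(1−b)/b) √α Q²
 + (2(b−1)/b) √α Q^{1/b+3}`; equivalently `𝓛(Q²) = SQ`. -/
theorem H_on_sqrtAlpha_Qsq (b A : ℝ) (hb : b < -1) (hA : 0 < A) :
    (∀ x : ℝ,
      Hop b A (fun y => Real.sqrt (alphaP b A y) * Qp b A y ^ 2) x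
        = 2 * kP b A * (1 - b) / b * Real.sqrt (alphaP b A x) * Qp b A x ^ 2
          + 2 * (b - 1) / b * Real.sqrt (alphaP b A x) * Qp b A x ^ (1 / b + 3)) ∧
    ∀ x : ℝ, Lop b A (fun y => Qp b A y ^ 2) x = SQp b A x :=
  ⟨Hop_sqrt_alphaP_mul_Qp_sq hb hA, Lop_Qp_sq hb hA⟩
end
end

section
/- Lefton profile relations: For all x ∈ ℝ: (i) q(x) − q''(x) = Q(x), i.e. Q = (1 − ∂_x²)q; (ii) q(x)^b·Q(x) = ((1−b)/2)·A^{b+1}; and consequently (iii) q(x)·Q'(x) + b·q'(x)·Q(x) = 0, so the pair (u,m) = (q,Q) is a time-independent solution of the b-family equation u·m_x + b·u_x·m = 0. -/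
open Real MeasureTheory Filter

noncomputable section

lemma cosh_rpow_hasDerivAt (ν p x : ℝ) :
    HasDerivAt (fun y => Real.cosh (ν*y) ^ p)
      (Real.sinh (ν*x) * ν * p * Real.cosh (ν*x) ^ (p-1)) x := by
  have h1 : HasDerivAt (fun y : ℝ => ν*y) ν x := by simpa using (hasDerivAt_id x).const_mul ν
  have h2 := (Real.hasDerivAt_cosh (ν*x)).comp x h1
  exact h2.rpow_const (Or.inl (Real.cosh_pos _).ne')

/-- **Lefton profile relations**: (i) `q − q'' = Q`; (ii) `q^b · Q = ((1−b)/2) A^{b+1}`;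
(iii) `q Q' + b q' Q = 0`, so `(u,m) = (q,Q)` is a stationary solution. -/
theorem lefton_profile_relations (b A : ℝ) (hb : b < -1) (hA : 0 < A) :
    (∀ x : ℝ, qp b A x - deriv (deriv (qp b A)) x = Qp b A x) ∧
    (∀ x : ℝ, qp b A x ^ b * Qp b A x = (1 - b) / 2 * A ^ (b + 1)) ∧
    ∀ x : ℝ, qp b A x * deriv (Qp b A) x + b * deriv (qp b A) x * Qp b A x = 0 := by
  set ν := nuP b with hνdef
  have hν : 0 < ν := by rw [hνdef]; unfold nuP; linarith
  have hνne : ν ≠ 0 := hν.ne'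
  set p : ℝ := -1 / ν with hpdef
  have hb1ne : b + 1 ≠ 0 := by linarith
  have h2ν : 2 * ν = -(b+1) := by rw [hνdef]; unfold nuP; ring
  have hbν : b / ν = p - 2 := by
    rw [div_eq_iff hνne, hpdef]
    have h3 : (-1/ν - 2) * ν = -1 - 2*ν := by field_simp
    rw [h3, h2ν]; ring
  have hq : ∀ x : ℝ, HasDerivAt (qp b A)
      (-A * (Real.sinh (ν*x) * Real.cosh (ν*x) ^ (p-1))) x := by
    intro x
    have h := (cosh_rpow_hasDerivAt ν p x).const_mul A
    have he : A * (Real.sinh (ν*x) * ν * p * Real.cosh (ν*x) ^ (p-1))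
        = -A * (Real.sinh (ν*x) * Real.cosh (ν*x) ^ (p-1)) := by
      rw [hpdef]; field_simp
    rw [he] at h
    exact h
  have hq' : deriv (qp b A) = fun x =>
      -A * (Real.sinh (ν*x) * Real.cosh (ν*x) ^ (p-1)) :=
    funext fun x => (hq x).deriv
  have hq'' : ∀ x : ℝ, deriv (deriv (qp b A)) x =
      -A * (Real.cosh (ν*x) * ν * Real.cosh (ν*x) ^ (p-1)
        + Real.sinh (ν*x) * (Real.sinh (ν*x) * ν * (p-1) * Real.cosh (ν*x) ^ (p-1-1))) := by
    intro x
    rw [hq']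
    have h1 : HasDerivAt (fun y : ℝ => ν*y) ν x := by simpa using (hasDerivAt_id x).const_mul ν
    have hs : HasDerivAt (fun y => Real.sinh (ν*y)) (Real.cosh (ν*x) * ν) x :=
      (Real.hasDerivAt_sinh (ν*x)).comp x h1
    exact ((hs.mul (cosh_rpow_hasDerivAt ν (p-1) x)).const_mul (-A)).deriv
  have hc : ∀ x : ℝ, (0:ℝ) < Real.cosh (ν*x) := fun x => Real.cosh_pos _
  refine ⟨?_, ?_, ?_⟩
  · intro x
    rw [hq'' x]
    set c := Real.cosh (ν*x) with hcd
    set s := Real.sinh (ν*x) with hsd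
    have e1 : c ^ (p-1) = c ^ (p-2) * c := by
      rw [show p-1 = (p-2)+1 by ring, Real.rpow_add_one (hc x).ne']
    have e2 : c ^ (p-1-1) = c ^ (p-2) := by rw [show p-1-1 = p-2 by ring]
    have e3 : c ^ p = c ^ (p-2) * c * c := by
      rw [← Real.rpow_add_one (hc x).ne' (p-2), ← Real.rpow_add_one (hc x).ne' (p-2+1)]
      congr 1; ring
    have hs2 : s ^ 2 = c ^ 2 - 1 := by rw [hsd, hcd, Real.sinh_sq]
    have hνp : ν * (p - 1) = -1 - ν := by rw [hpdef]; field_simp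
    have hb1 : (1-b)/2 = 1 + ν := by rw [hνdef]; unfold nuP; ring
    show A * c ^ (-1/ν) - _ = A * (1-b) / 2 * c ^ (b/ν)
    rw [hbν, ← hpdef, e1, e2, e3]
    linear_combination (A * s^2 * c^(p-2)) * hνp + (A * (-1-ν) * c^(p-2)) * hs2
      - (A * c^(p-2)) * hb1
  · intro x
    show (A * Real.cosh (ν*x) ^ (-1/ν)) ^ b * (A * (1-b)/2 * Real.cosh (ν*x) ^ (b/ν)) = _
    rw [Real.mul_rpow hA.le (Real.rpow_nonneg (hc x).le _), ← Real.rpow_mul (hc x).le]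
    have hx : Real.cosh (ν*x) ^ (-1/ν*b) * Real.cosh (ν*x) ^ (b/ν) = 1 := by
      rw [← Real.rpow_add (hc x), show -1/ν*b + b/ν = 0 by ring, Real.rpow_zero]
    rw [Real.rpow_add_one hA.ne']
    linear_combination (A ^ b * A * (1-b)/2) * hx
  · intro x
    have hQ : HasDerivAt (Qp b A)
        (A*(1-b)/2 * (Real.sinh (ν*x) * ν * (b/ν) * Real.cosh (ν*x) ^ (b/ν - 1))) x :=
      (cosh_rpow_hasDerivAt ν (b/ν) x).const_mul (A*(1-b)/2)
    rw [hQ.deriv, hq']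
    show A * Real.cosh (ν*x) ^ (-1/ν) * _ + b * _ * (A * (1-b)/2 * Real.cosh (ν*x) ^ (b/ν)) = 0
    set c := Real.cosh (ν*x)
    set s := Real.sinh (ν*x)
    have key : c ^ (-1/ν) * c ^ (b/ν - 1) = c ^ (p-1) * c ^ (b/ν) := by
      rw [← Real.rpow_add (hc x), ← Real.rpow_add (hc x)]
      congr 1
      rw [hpdef]; ring
    have hνinv : ν * ν⁻¹ = 1 := mul_inv_cancel₀ hνne
    linear_combination (A^2 * (1-b)/2 * b * s) * key
      + (A^2 * (1-b)/2 * s * b * c^(b/ν-1) * c^(-1/ν)) * hνinv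
end
end
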